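/- arXiv:1301.6991 — 2 statements merged into one kernel-verified Lean document; each statement's English description precedes it below -/
import Mathlib

section
/- In the Beltrami–Klein model with foci F₁ = (1,f,0), F₂ = (1,-f,0), 0 < f < 1, a proper point P = (1,x,y) satisfying |d(P,F₁) - d(P,F₂)| = 2a (with 0 < 2a < d(F₁,F₂)) satisfies x²/tanh²(a) + y²/(1 + 1/((f²-1)cosh²(a))) = 1, where now the coefficient 1 + 1/((f²-1)cosh²(a)) is negative, so the curve is a Euclidean hyperbola in the model. -/
/-!
In the Klein disc, cosh of the distance between `(1, x, y)` and `(1, u, v)` is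
`(1 - x u - y v) / √((1 - x² - y²)(1 - u² - v²))`; for `P` and the foci the numerators are
`1 ∓ f x` over a common denominator `S`. Since `cosh d₁ cosh d₂ - cosh (d₁ - d₂) = sinh d₁ sinh d₂`,
the condition `|d₁ - d₂| = 2a` gives `(c₁ c₂ - cosh 2a)² = (c₁² - 1)(c₂² - 1)` for `cᵢ = cosh dᵢ`.
Multiplying by `S⁴` turns this into `S²` times a quadratic in `x, y`, which is the stated conic.
Finally `2a < d(F₁, F₂)` means `cosh 2a < (1 + f²)/(1 - f²)`, i.e. `(1 - f²) cosh² a < 1`,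
which makes the coefficient of `y²` negative.
-/

open Real

/-- Lorentzian bilinear form of signature (1,2) on coordinate triples. -/
def lor (u v : ℝ × ℝ × ℝ) : ℝ := -(u.1 * v.1) + u.2.1 * v.2.1 + u.2.2 * v.2.2

lemma lor_one_one (x y u v : ℝ) : lor (1, x, y) (1, u, v) = -(1 - x * u - y * v) := by
  simp only [lor]; ring

lemma neg_lor_div_sqrt_one_one (x y u v : ℝ) :
    -lor (1, x, y) (1, u, v) / √(lor (1, x, y) (1, x, y) * lor (1, u, v) (1, u, v)) =
      (1 - x * u - y * v) / √((1 - x ^ 2 - y ^ 2) * (1 - u ^ 2 - v ^ 2)) := by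
  simp only [lor_one_one, neg_neg, neg_mul_neg]
  ring_nf

lemma cosh_sub_eq_of_abs_sub_eq {u v a : ℝ} (h : |u - v| = 2 * a) :
    cosh (u - v) = 2 * cosh a ^ 2 - 1 := by
  rw [← cosh_abs, h, cosh_two_mul, sinh_sq]; ring

lemma sq_cosh_mul_cosh_sub_cosh_sub (u v : ℝ) :
    (cosh u * cosh v - cosh (u - v)) ^ 2 = (cosh u ^ 2 - 1) * (cosh v ^ 2 - 1) := by
  rw [cosh_sub, ← sinh_sq, ← sinh_sq]; ring

lemma focal_poly_eq_zero {f x y S c₁ c₂ C : ℝ}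
    (hS : S ^ 2 = (1 - x ^ 2 - y ^ 2) * (1 - f ^ 2)) (hS0 : S ≠ 0)
    (h₁ : c₁ * S = 1 - f * x) (h₂ : c₂ * S = 1 + f * x)
    (h : (c₁ * c₂ - (2 * C ^ 2 - 1)) ^ 2 = (c₁ ^ 2 - 1) * (c₂ ^ 2 - 1)) :
    1 - C ^ 2 + C ^ 2 * f ^ 2 * x ^ 2 +
      C ^ 2 * (C ^ 2 - 1) * (1 - f ^ 2) * (1 - x ^ 2 - y ^ 2) = 0 := by
  have key : (c₁ * S * (c₂ * S) - (2 * C ^ 2 - 1) * S ^ 2) ^ 2 =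
      ((c₁ * S) ^ 2 - S ^ 2) * ((c₂ * S) ^ 2 - S ^ 2) := by
    linear_combination S ^ 4 * h
  rw [h₁, h₂, hS] at key
  have hS2 : (1 - x ^ 2 - y ^ 2) * (1 - f ^ 2) ≠ 0 := hS ▸ pow_ne_zero 2 hS0
  refine (mul_eq_zero.mp ?_).resolve_left hS2
  linear_combination (1 / 4 : ℝ) * key

lemma div_tanh_sq_add_div_eq_one {f x y a : ℝ} (ha : a ≠ 0)
    (hf : f ^ 2 - 1 ≠ 0) (hD : (f ^ 2 - 1) * cosh a ^ 2 + 1 ≠ 0)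
    (h : 1 - cosh a ^ 2 + cosh a ^ 2 * f ^ 2 * x ^ 2 +
      cosh a ^ 2 * (cosh a ^ 2 - 1) * (1 - f ^ 2) * (1 - x ^ 2 - y ^ 2) = 0) :
    x ^ 2 / tanh a ^ 2 + y ^ 2 / (1 + 1 / ((f ^ 2 - 1) * cosh a ^ 2)) = 1 := by
  have hsinh : sinh a ^ 2 ≠ 0 := pow_ne_zero 2 (sinh_ne_zero.2 ha)
  have hcosh : cosh a ≠ 0 := (cosh_pos a).ne'
  rw [mul_comm] at hD
  rw [tanh_eq_sinh_div_cosh, div_pow]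
  field_simp
  rw [sinh_sq]
  linear_combination h

theorem stmt_4_general (f a x y d₁ d₂ dF : ℝ)
    (hf : 0 < f) (hf' : f < 1) (hP : x ^ 2 + y ^ 2 < 1)
    (hdF : 0 ≤ dF)
    (h₁ : Real.cosh d₁ = -(lor (1, x, y) (1, f, 0)) /
        Real.sqrt (lor (1, x, y) (1, x, y) * lor (1, f, 0) (1, f, 0)))
    (h₂ : Real.cosh d₂ = -(lor (1, x, y) (1, -f, 0)) /
        Real.sqrt (lor (1, x, y) (1, x, y) * lor (1, -f, 0) (1, -f, 0)))
    (hF : Real.cosh dF = -(lor (1, f, 0) (1, -f, 0)) /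
        Real.sqrt (lor (1, f, 0) (1, f, 0) * lor (1, -f, 0) (1, -f, 0)))
    (hdiff : |d₁ - d₂| = 2 * a) (ha0 : 0 < 2 * a) (ha : 2 * a < dF) :
    x ^ 2 / Real.tanh a ^ 2 +
      y ^ 2 / (1 + 1 / ((f ^ 2 - 1) * Real.cosh a ^ 2)) = 1 ∧
    1 + 1 / ((f ^ 2 - 1) * Real.cosh a ^ 2) < 0 := by
  have hf2 : 0 < 1 - f ^ 2 := by nlinarith
  have hq : 0 < 1 - x ^ 2 - y ^ 2 := by linarith
  simp only [neg_lor_div_sqrt_one_one, mul_zero, sub_zero, zero_pow two_ne_zero, neg_sq, mul_neg,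
    sub_neg_eq_add] at h₁ h₂ hF
  have hcF : cosh dF = (1 + f ^ 2) / (1 - f ^ 2) := by
    rw [hF, sqrt_mul_self hf2.le, sq]
  have hcosh_sq : (1 - f ^ 2) * cosh a ^ 2 < 1 := by
    have h := cosh_lt_cosh.2 (by rwa [abs_of_pos ha0, abs_of_nonneg hdF] : |2 * a| < |dF|)
    rw [cosh_two_mul, sinh_sq, hcF, lt_div_iff₀ hf2] at h
    linarith
  set S := √((1 - x ^ 2 - y ^ 2) * (1 - f ^ 2))
  have hS0 : S ≠ 0 := (sqrt_pos.2 (by positivity)).ne'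
  have hE := focal_poly_eq_zero (sq_sqrt (by positivity)) hS0
    (by rw [h₁]; field_simp; ring) (by rw [h₂]; field_simp; ring)
    (cosh_sub_eq_of_abs_sub_eq hdiff ▸ sq_cosh_mul_cosh_sub_cosh_sub d₁ d₂)
  have hD : (f ^ 2 - 1) * cosh a ^ 2 < 0 := mul_neg_of_neg_of_pos (by linarith) (by positivity)
  refine ⟨div_tanh_sq_add_div_eq_one (by linarith) (by linarith) (by linarith) hE, ?_⟩
  have : 1 / ((f ^ 2 - 1) * cosh a ^ 2) < -1 := by
    rw [div_lt_iff_of_neg hD]; linarith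
  linarith

/-- A proper point of the Beltrami–Klein model whose hyperbolic distances to the foci
`F₁ = (1,f,0)`, `F₂ = (1,-f,0)` differ in absolute value by `2a` (with `0 < 2a` smaller
than the distance of the foci) lies on the curve
`x²/tanh²a + y²/(1 + 1/((f²-1)cosh²a)) = 1`, whose second coefficient is negative,
so the curve is a Euclidean hyperbola in the model. -/
theorem stmt_4 (f a x y d₁ d₂ dF : ℝ)
    (hf : 0 < f) (hf' : f < 1) (hP : x ^ 2 + y ^ 2 < 1)
    (hd₁ : 0 ≤ d₁) (hd₂ : 0 ≤ d₂) (hdF : 0 ≤ dF)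
    (h₁ : Real.cosh d₁ = -(lor (1, x, y) (1, f, 0)) /
        Real.sqrt (lor (1, x, y) (1, x, y) * lor (1, f, 0) (1, f, 0)))
    (h₂ : Real.cosh d₂ = -(lor (1, x, y) (1, -f, 0)) /
        Real.sqrt (lor (1, x, y) (1, x, y) * lor (1, -f, 0) (1, -f, 0)))
    (hF : Real.cosh dF = -(lor (1, f, 0) (1, -f, 0)) /
        Real.sqrt (lor (1, f, 0) (1, f, 0) * lor (1, -f, 0) (1, -f, 0)))
    (hdiff : |d₁ - d₂| = 2 * a) (ha0 : 0 < 2 * a) (ha : 2 * a < dF) :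
    x ^ 2 / Real.tanh a ^ 2 +
      y ^ 2 / (1 + 1 / ((f ^ 2 - 1) * Real.cosh a ^ 2)) = 1 ∧
    1 + 1 / ((f ^ 2 - 1) * Real.cosh a ^ 2) < 0 :=
  stmt_4_general f a x y d₁ d₂ dF hf hf' hP hdF h₁ h₂ hF hdiff ha0 ha
end

section
/- In the Beltrami–Klein model, the orthoptic curve of the hyperbolic segment with endpoints (±a,0), 0 < a < 1, is the Euclidean ellipse x²/a² + y²(1+a²)/a² = 1 (minus the endpoints), and as a → 1 this curve tends to the curve x² + 2y² = 1, which is a hypercycle of the hyperbolic plane. -/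
open Real Filter

/-!
A line `1 + x u₁ + y u₂ = 0` through a proper point `(x, y)` has spacelike coordinates
`(1, u₁, u₂)`, so the angle formula has a positive denominator and a right angle means
`lor u v = 0`. For the lines through `(±a, 0)` and `(x, y)` one has `a u₁ = -1`, `a v₁ = 1`,
`a y u₂ = x - a`, `a y v₂ = -x - a`, and `a² y² · lor u v = 0` is the ellipse equation.
The limit curve `x² + 2y² = 1` makes the constant ratio `√2` with the feet `(x, 0)` of the
perpendiculars onto the `x`-axis, i.e. it lies at distance `arcosh √2` from that axis.
-/

lemma lor_one_self (p q : ℝ) : lor (1, p, q) (1, p, q) = p ^ 2 + q ^ 2 - 1 := by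
  simp only [lor]; ring

lemma lor_one_self_pos_of_incident {x y u₁ u₂ : ℝ} (hin : x ^ 2 + y ^ 2 < 1)
    (hinc : 1 + x * u₁ + y * u₂ = 0) : 0 < lor (1, u₁, u₂) (1, u₁, u₂) := by
  rw [lor_one_self]
  -- Lagrange: `(x² + y²)(u₁² + u₂²) = (x u₁ + y u₂)² + (x u₂ - y u₁)² ≥ 1`.
  have hcs : 1 ≤ (x ^ 2 + y ^ 2) * (u₁ ^ 2 + u₂ ^ 2) := by
    nlinarith [sq_nonneg (x * u₂ - y * u₁)]
  nlinarith [sq_nonneg u₁, sq_nonneg u₂, sq_nonneg x, sq_nonneg y]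

lemma lor_eq_zero_of_angle_eq_pi_div_two {u v : ℝ × ℝ × ℝ} (hu : 0 < lor u u) (hv : 0 < lor v v)
    (h : -lor u v / √(lor u u * lor v v) = cos (π / 2)) : lor u v = 0 := by
  have hden : √(lor u u * lor v v) ≠ 0 := by positivity
  rw [cos_pi_div_two, div_eq_zero_iff, neg_eq_zero] at h
  exact h.resolve_right hden

lemma orthoptic_eq {a x y u₁ u₂ v₁ v₂ : ℝ}
    (hu₁ : 1 + a * u₁ + 0 * u₂ = 0) (hu₂ : 1 + x * u₁ + y * u₂ = 0)
    (hv₁ : 1 + (-a) * v₁ + 0 * v₂ = 0) (hv₂ : 1 + x * v₁ + y * v₂ = 0)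
    (horth : lor (1, u₁, u₂) (1, v₁, v₂) = 0) :
    x ^ 2 + y ^ 2 * (1 + a ^ 2) = a ^ 2 := by
  have hau : a * u₁ = -1 := by linear_combination hu₁
  have hav : a * v₁ = 1 := by linear_combination -hv₁
  have hayu : a * (y * u₂) = x - a := by linear_combination a * hu₂ - x * hau
  have hayv : a * (y * v₂) = -x - a := by linear_combination a * hv₂ - x * hav
  simp only [lor] at horth
  linear_combination (-(a ^ 2 * y ^ 2)) * horth + y ^ 2 * (a * v₁) * hau - y ^ 2 * hav
    + a * y * v₂ * hayu + (x - a) * hayv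

lemma tendsto_ellipse_coeffs :
    Tendsto (fun a : ℝ => (1 / a ^ 2, (1 + a ^ 2) / a ^ 2))
      (nhdsWithin 1 (Set.Iio 1)) (nhds (1, 2)) := by
  have hcont : ContinuousAt (fun a : ℝ => (1 / a ^ 2, (1 + a ^ 2) / a ^ 2)) 1 := by
    fun_prop (disch := norm_num)
  convert hcont.tendsto.mono_left nhdsWithin_le_nhds using 2
  norm_num

lemma lor_ratio_foot_eq_sqrt_two {x y : ℝ} (hell : x ^ 2 + 2 * y ^ 2 = 1)
    (hin : x ^ 2 + y ^ 2 < 1) :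
    -lor (1, x, y) (1, x, 0) / √(lor (1, x, y) (1, x, y) * lor (1, x, 0) (1, x, 0)) = √2 := by
  have hy : y ≠ 0 := by rintro rfl; nlinarith
  have hPQ : lor (1, x, y) (1, x, 0) = -(2 * y ^ 2) := by
    simp only [lor]; linear_combination hell
  have hPP : lor (1, x, y) (1, x, y) = -y ^ 2 := by
    rw [lor_one_self]; linear_combination hell
  have hQQ : lor (1, x, 0) (1, x, 0) = -(2 * y ^ 2) := by
    rw [lor_one_self]; linear_combination hell
  rw [hPQ, hPP, hQQ, show -y ^ 2 * -(2 * y ^ 2) = 2 * (y ^ 2) ^ 2 by ring,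
    sqrt_mul zero_le_two, sqrt_sq (sq_nonneg y)]
  field_simp
  rw [sq_sqrt zero_le_two]

/-- The orthoptic (Thales) curve of the hyperbolic segment with endpoints `(±a,0)`,
`0 < a < 1`, in the Beltrami–Klein model is the Euclidean ellipse
`x²/a² + y²(1+a²)/a² = 1`; as `a → 1⁻` its coefficients tend to those of `x² + 2y² = 1`,
which is a hypercycle (a curve of constant hyperbolic distance from the `x`-axis). -/
theorem stmt_18 :
    (∀ a x y u₁ u₂ v₁ v₂ : ℝ, 0 < a → a < 1 → x ^ 2 + y ^ 2 < 1 → y ≠ 0 →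
      1 + a * u₁ + 0 * u₂ = 0 → 1 + x * u₁ + y * u₂ = 0 →
      1 + (-a) * v₁ + 0 * v₂ = 0 → 1 + x * v₁ + y * v₂ = 0 →
      -(lor (1, u₁, u₂) (1, v₁, v₂)) /
          Real.sqrt (lor (1, u₁, u₂) (1, u₁, u₂) * lor (1, v₁, v₂) (1, v₁, v₂))
        = Real.cos (π / 2) →
      x ^ 2 / a ^ 2 + y ^ 2 * (1 + a ^ 2) / a ^ 2 = 1) ∧
    Tendsto (fun a : ℝ => (1 / a ^ 2, (1 + a ^ 2) / a ^ 2))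
      (nhdsWithin 1 (Set.Iio 1)) (nhds (1, 2)) ∧
    ∃ d : ℝ, 0 ≤ d ∧ ∀ x y : ℝ, x ^ 2 + 2 * y ^ 2 = 1 → x ^ 2 + y ^ 2 < 1 →
      Real.cosh d = -(lor (1, x, y) (1, x, 0)) /
        Real.sqrt (lor (1, x, y) (1, x, y) * lor (1, x, 0) (1, x, 0)) := by
  have one_le_sqrt_two : (1 : ℝ) ≤ √2 := one_le_sqrt.mpr one_le_two
  refine ⟨?_, tendsto_ellipse_coeffs, arcosh √2, arcosh_nonneg one_le_sqrt_two, ?_⟩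
  · intro a x y u₁ u₂ v₁ v₂ ha _ hin _ hu₁ hu₂ hv₁ hv₂ hangle
    have horth := lor_eq_zero_of_angle_eq_pi_div_two (lor_one_self_pos_of_incident hin hu₂)
      (lor_one_self_pos_of_incident hin hv₂) hangle
    have hell := orthoptic_eq hu₁ hu₂ hv₁ hv₂ horth
    field_simp
    linear_combination hell
  · intro x y hell hin
    rw [lor_ratio_foot_eq_sqrt_two hell hin, cosh_arcosh one_le_sqrt_two]
end
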